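/- For every n ∈ ℕ, the square consisting of multiplication by f^n on R, multiplication by ι(f)^n on R̂, and the two completion maps ι, is Cartesian as a square of R-modules: for every x ∈ R and ŷ ∈ R̂ with ι(x) = ι(f)^n · ŷ, there exists a unique y ∈ R with f^n · y = x and ι(y) = ŷ. -/

import Mathlib

/-!
If `f` is a nonzerodivisor on `M`, it stays one on the `(f)`-adic completion of `M`: when
`f • a = 0`, a representative `m` of `a` at level `n + 1` has `f • m ∈ f ^ (n + 1) M`, so
`m ∈ f ^ n M` after cancelling `f`, and `a` vanishes at level `n`. Reading `ι x = ι(f)^n * ŷ`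
at level `n`, where `ι(f)^n` vanishes, gives `x = f ^ n * y`; then `ι y = ŷ` and uniqueness
follow by cancelling `f ^ n` in `R̂` and in `R`.
-/

noncomputable section

variable (R : Type*) [CommRing R] (f : R)

/-- The `(f)`-adic completion `R̂` of `R`. -/
abbrev Rhat : Type _ := AdicCompletion (Ideal.span {f}) R

section

variable {R f} {M : Type*} [AddCommGroup M] [Module R M]

lemma Submodule.mem_span_singleton_pow_smul_top_iff {n : ℕ} {m : M} :
    m ∈ (Ideal.span {f} ^ n • ⊤ : Submodule R M) ↔ ∃ m' : M, f ^ n • m' = m := by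
  rw [Ideal.span_singleton_pow, Submodule.ideal_span_singleton_smul,
    Submodule.mem_smul_pointwise_iff_exists]
  simp

open Submodule in
lemma AdicCompletion.mem_pow_smul_top_of_of_eq_smul {I : Ideal R} {n : ℕ} {a : R}
    (ha : a ∈ I ^ n) {x : M} {y : AdicCompletion I M} (h : of I M x = a • y) :
    x ∈ (I ^ n • ⊤ : Submodule R M) := by
  have hx := congrArg (eval I M n) h
  rw [eval_of, map_smul] at hx
  rw [← Quotient.mk_eq_zero, ← mkQ_apply, hx]
  induction eval I M n y using Quotient.induction_on with
  | H z =>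
    rw [← Quotient.mk_smul, Quotient.mk_eq_zero]
    exact smul_mem_smul ha mem_top

open AdicCompletion Submodule in
lemma IsSMulRegular.adicCompletion (hf : IsSMulRegular M f) :
    IsSMulRegular (AdicCompletion (Ideal.span {f}) M) f := by
  refine .of_right_eq_zero_of_smul fun a ha ↦ ext fun n ↦ ?_
  obtain ⟨m, hm⟩ := Submodule.Quotient.mk_surjective _ (a.val (n + 1))
  have hfm : f • m ∈ (Ideal.span {f} ^ (n + 1) • ⊤ : Submodule R M) := by
    rw [← Quotient.mk_eq_zero, Quotient.mk_smul, hm, ← val_smul_apply, ha]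
    rfl
  obtain ⟨m', hm'⟩ := mem_span_singleton_pow_smul_top_iff.mp hfm
  have hm_mem : m ∈ (Ideal.span {f} ^ n • ⊤ : Submodule R M) :=
    mem_span_singleton_pow_smul_top_iff.mpr
      ⟨m', hf (by simp only [← mul_smul, ← pow_succ', hm'])⟩
  rw [← transitionMap_comp_eval_apply _ M n.le_succ, ← hm]
  simpa using hm_mem

end

open AdicCompletion in
theorem stmt2 (hf : f ∈ nonZeroDivisors R) (n : ℕ)
    (x : R) (yhat : Rhat R f)
    (h : algebraMap R (Rhat R f) x = (algebraMap R (Rhat R f) f) ^ n * yhat) :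
    ∃! y : R, f ^ n * y = x ∧ algebraMap R (Rhat R f) y = yhat := by
  have hf_reg : IsSMulRegular R f := (isRegular_iff_mem_nonZeroDivisors.mpr hf).left.isSMulRegular
  rw [← map_pow, ← Algebra.smul_def] at h
  obtain ⟨y, rfl⟩ := Submodule.mem_span_singleton_pow_smul_top_iff.mp
    (mem_pow_smul_top_of_of_eq_smul (Ideal.pow_mem_pow (Ideal.mem_span_singleton_self f) n) h)
  refine ⟨y, ⟨rfl, ?_⟩, fun y' hy' ↦ hf_reg.pow n hy'.1⟩
  exact hf_reg.adicCompletion.pow n ((map_smul (of _ R) (f ^ n) y).symm.trans h)
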